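/- Let Γ be a strictly Deza graph with parameters (n, k, b, a) with k = b + 1 and β(v) > 1 for every vertex v. If x is a vertex of type (A) and xᵢ ∈ B(x), then B[x] = B[xᵢ] and B(xᵢ) ∩ N(xᵢ) = ∅; in particular, every vertex of B(x) is of type (A). -/

import Mathlib

open Finset SimpleGraph

universe u v

/-- The number of common neighbours of two vertices. -/
def commonNbrs {V : Type u} [Fintype V] [DecidableEq V] (G : SimpleGraph V)
    [DecidableRel G.Adj] (x y : V) : ℕ :=
  (G.neighborFinset x ∩ G.neighborFinset y).card

/-- `G` is a Deza graph with parameters `(n, k, b, a)`: a nonempty `k`-regular graph on `n`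
vertices in which any two distinct vertices have either `b` or `a` common neighbours,
where `b ≥ a`. -/
def IsDezaGraph {V : Type u} [Fintype V] [DecidableEq V] (G : SimpleGraph V)
    [DecidableRel G.Adj] (n k b a : ℕ) : Prop :=
  G ≠ ⊥ ∧ Fintype.card V = n ∧ G.IsRegularOfDegree k ∧ a ≤ b ∧
    ∀ x y : V, x ≠ y → commonNbrs G x y = b ∨ commonNbrs G x y = a

/-- `G` is a strictly Deza graph with parameters `(n, k, b, a)`: a Deza graph of
diameter 2 that is not strongly regular. -/
def IsStrictlyDezaGraph {V : Type u} [Fintype V] [DecidableEq V] (G : SimpleGraph V)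
    [DecidableRel G.Adj] (n k b a : ℕ) : Prop :=
  IsDezaGraph G n k b a ∧ G.Connected ∧ (∀ x y : V, G.dist x y ≤ 2) ∧
    (∃ x y : V, G.dist x y = 2) ∧ ¬ ∃ ℓ μ : ℕ, G.IsSRGWith n k ℓ μ

/-- `B(v)`: the set of vertices `u ≠ v` having exactly `b` common neighbours with `v`. -/
def dezaB {V : Type u} [Fintype V] [DecidableEq V] (G : SimpleGraph V)
    [DecidableRel G.Adj] (b : ℕ) (v : V) : Finset V :=
  univ.filter fun u => u ≠ v ∧ commonNbrs G u v = b

/-- `A(v)`: the set of vertices `u ≠ v` having exactly `a` common neighbours with `v`. -/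
def dezaA {V : Type u} [Fintype V] [DecidableEq V] (G : SimpleGraph V)
    [DecidableRel G.Adj] (a : ℕ) (v : V) : Finset V :=
  univ.filter fun u => u ≠ v ∧ commonNbrs G u v = a

/-- `B[v] = B(v) ∪ {v}`. -/
def dezaBc {V : Type u} [Fintype V] [DecidableEq V] (G : SimpleGraph V)
    [DecidableRel G.Adj] (b : ℕ) (v : V) : Finset V :=
  insert v (dezaB G b v)

/-- A vertex `v` is of type (A) if `B(v) ∩ N(v) = ∅`. -/
def IsTypeA {V : Type u} [Fintype V] [DecidableEq V] (G : SimpleGraph V)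
    [DecidableRel G.Adj] (b : ℕ) (v : V) : Prop :=
  dezaB G b v ∩ G.neighborFinset v = ∅

/-- A vertex `v` is of type (B) if `B(v) ⊆ N(v)`. -/
def IsTypeB {V : Type u} [Fintype V] [DecidableEq V] (G : SimpleGraph V)
    [DecidableRel G.Adj] (b : ℕ) (v : V) : Prop :=
  dezaB G b v ⊆ G.neighborFinset v

/-- A vertex `v` is of type (C) if `|B(v) ∩ N(v)| = 1`. -/
def IsTypeC {V : Type u} [Fintype V] [DecidableEq V] (G : SimpleGraph V)
    [DecidableRel G.Adj] (b : ℕ) (v : V) : Prop :=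
  (dezaB G b v ∩ G.neighborFinset v).card = 1

/-- A vertex `x` of type (A) is of type (A1) if there exists `y ∈ N(x)` with
`N(x) \ N(xᵢ) = {y}` for every `xᵢ ∈ B(x)`. -/
def IsTypeA1 {V : Type u} [Fintype V] [DecidableEq V] (G : SimpleGraph V)
    [DecidableRel G.Adj] (b : ℕ) (x : V) : Prop :=
  IsTypeA G b x ∧ ∃ y ∈ G.neighborFinset x,
    ∀ xi ∈ dezaB G b x, G.neighborFinset x \ G.neighborFinset xi = {y}

/-- A vertex `x` of type (A) is of type (A2) if there exists `z ∉ N[x]` with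
`N(xᵢ) \ N(x) = {z}` for every `xᵢ ∈ B(x)`. -/
def IsTypeA2 {V : Type u} [Fintype V] [DecidableEq V] (G : SimpleGraph V)
    [DecidableRel G.Adj] (b : ℕ) (x : V) : Prop :=
  IsTypeA G b x ∧ ∃ z ∉ insert x (G.neighborFinset x),
    ∀ xi ∈ dezaB G b x, G.neighborFinset xi \ G.neighborFinset x = {z}

/-- The complete multipartite graph with `m` parts of size `t`. -/
def completeMultipartiteGr (m t : ℕ) : SimpleGraph (Fin m × Fin t) where
  Adj u v := u.1 ≠ v.1
  symm := ⟨fun _ _ h => Ne.symm h⟩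
  loopless := ⟨fun _ h => h rfl⟩

/-- The 2-clique extension of a graph `H`: vertices `(u, i)` and `(v, j)` are adjacent
iff `u ~ v` in `H`, or `u = v` and `i ≠ j`. -/
def cliqueExt2 {W : Type v} (H : SimpleGraph W) : SimpleGraph (W × Fin 2) where
  Adj u v := H.Adj u.1 v.1 ∨ (u.1 = v.1 ∧ u.2 ≠ v.2)
  symm := by
    constructor
    intro u v h
    rcases h with h | ⟨h1, h2⟩
    · exact Or.inl h.symm
    · exact Or.inr ⟨h1.symm, h2.symm⟩
  loopless := by
    constructor
    intro u h
    rcases h with h | ⟨_, h2⟩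
    · exact H.irrefl h
    · exact h2 rfl

/-!
With `k = b + 1`, two vertices with `b` common neighbours differ in exactly one neighbour each,
so `N(xᵢ) = N(x) - yᵢ + zᵢ` for `xᵢ ∈ B(x)`; and type (A) says that every neighbour of `x` has
exactly `a` common neighbours with `x`, so a neighbour of `x` with two further neighbours outside
`N[x]` forces `a + 3 ≤ k`. Both claims come down to exhibiting such a vertex, or a vertex with
`a + 1` common neighbours with `xᵢ`, inside `N(x)`.
-/

section

variable {V : Type u} [Fintype V] [DecidableEq V] {G : SimpleGraph V} [DecidableRel G.Adj]

lemma commonNbrs_comm (x y : V) : commonNbrs G x y = commonNbrs G y x := by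
  rw [commonNbrs, commonNbrs, inter_comm]

lemma card_commonNeighbors_eq_commonNbrs (x y : V) :
    Fintype.card (G.commonNeighbors x y) = commonNbrs G x y := by
  rw [commonNbrs, ← Set.toFinset_card]
  congr 1
  ext v
  simp [mem_commonNeighbors]

lemma isSRGWith_of_commonNbrs {n k ℓ μ : ℕ} (hn : Fintype.card V = n)
    (hreg : G.IsRegularOfDegree k) (hadj : ∀ v w, G.Adj v w → commonNbrs G v w = ℓ)
    (hnadj : ∀ v w, v ≠ w → ¬ G.Adj v w → commonNbrs G v w = μ) :
    G.IsSRGWith n k ℓ μ where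
  card := hn
  regular := hreg
  of_adj v w h := by rw [card_commonNeighbors_eq_commonNbrs, hadj v w h]
  of_not_adj v w hne h := by rw [card_commonNeighbors_eq_commonNbrs, hnadj v w hne h]

lemma commonNbrs_ne_zero_of_dist_le_two (hconn : G.Connected) (hdiam : ∀ x y, G.dist x y ≤ 2)
    {u v : V} (hne : u ≠ v) (hnadj : ¬ G.Adj u v) : commonNbrs G u v ≠ 0 := by
  intro h0
  have hempty : G.commonNeighbors u v = ∅ := by
    rw [← Set.toFinset_eq_empty, ← Finset.card_eq_zero, Set.toFinset_card,
      card_commonNeighbors_eq_commonNbrs, h0]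
  have h2 : 2 < G.edist u v := two_lt_edist_iff.mpr ⟨hne, hnadj, hempty⟩
  rw [← (hconn.preconnected u v).coe_dist_eq_edist] at h2
  exact absurd (hdiam u v) (by exact_mod_cast h2.not_ge)

namespace SimpleGraph.IsRegularOfDegree

lemma card_sdiff_add_commonNbrs {k : ℕ} (hreg : G.IsRegularOfDegree k) (u v : V) :
    #(G.neighborFinset u \ G.neighborFinset v) + commonNbrs G u v = k := by
  rw [commonNbrs, add_comm, card_inter_add_card_sdiff, card_neighborFinset_eq_degree,
    hreg.degree_eq]

variable {b : ℕ} {u v : V}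

lemma exists_mem_sdiff (hreg : G.IsRegularOfDegree (b + 1)) (h : commonNbrs G u v = b) :
    ∃ w ∈ G.neighborFinset u, w ∉ G.neighborFinset v := by
  have hcard := hreg.card_sdiff_add_commonNbrs u v
  obtain ⟨w, hw⟩ : (G.neighborFinset u \ G.neighborFinset v).Nonempty := by
    rw [← card_pos]; omega
  exact ⟨w, (mem_sdiff.1 hw).1, (mem_sdiff.1 hw).2⟩

lemma mem_neighborFinset_of_ne (hreg : G.IsRegularOfDegree (b + 1)) (h : commonNbrs G u v = b)
    {w c : V} (hw : w ∈ G.neighborFinset u)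
    (hwv : w ∉ G.neighborFinset v) (hc : c ∈ G.neighborFinset u) (hcw : c ≠ w) :
    c ∈ G.neighborFinset v := by
  by_contra hcv
  have hcard := hreg.card_sdiff_add_commonNbrs u v
  exact hcw (card_le_one.1 (by omega) c (mem_sdiff.2 ⟨hc, hcv⟩) w (mem_sdiff.2 ⟨hw, hwv⟩))

lemma eq_or_eq_of_mem_neighborFinset (hreg : G.IsRegularOfDegree 2) {v x y s : V}
    (hx : x ∈ G.neighborFinset v) (hy : y ∈ G.neighborFinset v) (hxy : x ≠ y)
    (hs : s ∈ G.neighborFinset v) : s = x ∨ s = y := by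
  have hpair : G.neighborFinset v = {x, y} := by
    refine (eq_of_subset_of_card_le (insert_subset hx (singleton_subset_iff.2 hy)) ?_).symm
    rw [card_pair hxy, card_neighborFinset_eq_degree, hreg.degree_eq]
  simpa [hpair] using hs

end SimpleGraph.IsRegularOfDegree

/-- A triangle in a connected `2`-regular graph of diameter at most `2` is the whole graph. -/
lemma eq_or_adj_of_commonNbrs_ne_zero (hreg : G.IsRegularOfDegree 2) (hconn : G.Connected)
    (hdiam : ∀ x y, G.dist x y ≤ 2) {v w : V} (hvw : G.Adj v w) (htri : commonNbrs G v w ≠ 0)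
    (p q : V) : p = q ∨ G.Adj p q := by
  obtain ⟨t, ht⟩ := card_pos.1 (Nat.pos_of_ne_zero htri)
  simp only [mem_inter, mem_neighborFinset] at ht
  obtain ⟨hvt, hwt⟩ := ht
  have hwt' : w ≠ t := hwt.ne
  have hvt' : v ≠ t := hvt.ne
  have hcover : ∀ s, s = v ∨ s = w ∨ s = t := by
    intro s
    by_contra! hs
    obtain ⟨m, hm⟩ := card_pos.1 (Nat.pos_of_ne_zero
      (commonNbrs_ne_zero_of_dist_le_two hconn hdiam hs.1.symm fun h =>
        (hreg.eq_or_eq_of_mem_neighborFinset (by simpa) (by simpa) hwt' (by simpa)).elim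
          hs.2.1 hs.2.2))
    simp only [mem_inter, mem_neighborFinset] at hm
    rcases hreg.eq_or_eq_of_mem_neighborFinset (by simpa) (by simpa) hwt' (by simpa using hm.1)
      with rfl | rfl
    · rcases hreg.eq_or_eq_of_mem_neighborFinset (by simpa using hvw.symm) (by simpa) hvt'
        (by simpa using hm.2.symm) with h | h
      exacts [hs.1 h, hs.2.2 h]
    · rcases hreg.eq_or_eq_of_mem_neighborFinset (by simpa using hvt.symm)
        (by simpa using hwt.symm) hvw.ne (by simpa using hm.2.symm) with h | h
      exacts [hs.1 h, hs.2.1 h]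
  rcases hcover p with rfl | rfl | rfl <;> rcases hcover q with rfl | rfl | rfl <;>
    simp [hvw, hvt, hwt, hvw.symm, hvt.symm, hwt.symm]

variable {n k b a : ℕ}

lemma mem_dezaB {u v : V} : u ∈ dezaB G b v ↔ u ≠ v ∧ commonNbrs G u v = b := by
  simp [dezaB]

lemma mem_dezaB_comm {u v : V} : u ∈ dezaB G b v ↔ v ∈ dezaB G b u := by
  rw [mem_dezaB, mem_dezaB, commonNbrs_comm, ne_comm]

variable {n k b a : ℕ}

namespace IsDezaGraph

lemma isRegularOfDegree (hG : IsDezaGraph G n k b a) : G.IsRegularOfDegree k := hG.2.2.1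

lemma commonNbrs_eq_or_eq (hG : IsDezaGraph G n k b a) {u v : V} (h : u ≠ v) :
    commonNbrs G u v = b ∨ commonNbrs G u v = a := hG.2.2.2.2 u v h

end IsDezaGraph

namespace IsStrictlyDezaGraph

lemma commonNbrs_ne_zero (hG : IsStrictlyDezaGraph G n k b a) {u v : V} (hne : u ≠ v)
    (hnadj : ¬ G.Adj u v) : commonNbrs G u v ≠ 0 :=
  commonNbrs_ne_zero_of_dist_le_two hG.2.1 hG.2.2.1 hne hnadj

lemma a_lt_b (hG : IsStrictlyDezaGraph G n k b a) : a < b := by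
  refine lt_of_le_of_ne hG.1.2.2.2.1 fun hab => hG.2.2.2.2 ⟨b, b, ?_⟩
  refine isSRGWith_of_commonNbrs hG.1.2.1 hG.1.isRegularOfDegree (fun v w h => ?_)
    (fun v w hne _ => ?_)
  · rcases hG.1.commonNbrs_eq_or_eq h.ne with h | h <;> omega
  · rcases hG.1.commonNbrs_eq_or_eq hne with h | h <;> omega

-- For `b = 1` the graph would be the `5`-cycle, which is strongly regular.
lemma two_le_b (hG : IsStrictlyDezaGraph G n (b + 1) b a) : 2 ≤ b := by
  have hab := hG.a_lt_b
  by_contra! hb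
  obtain rfl : b = 1 := by omega
  obtain rfl : a = 0 := by omega
  refine hG.2.2.2.2 ⟨0, 1, isSRGWith_of_commonNbrs hG.1.2.1 hG.1.isRegularOfDegree
    (fun v w h => ?_) (fun v w hne h => ?_)⟩
  · obtain ⟨p, q, hpq⟩ := hG.2.2.2.1
    rcases hG.1.commonNbrs_eq_or_eq h.ne with h1 | h0
    · rcases eq_or_adj_of_commonNbrs_ne_zero hG.1.isRegularOfDegree hG.2.1 hG.2.2.1 h
        (by omega) p q with rfl | hadj
      · simp at hpq
      · rw [dist_eq_one_iff_adj.2 hadj] at hpq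
        omega
    · exact h0
  · have := hG.commonNbrs_ne_zero hne h
    rcases hG.1.commonNbrs_eq_or_eq hne with h | h <;> omega

end IsStrictlyDezaGraph

variable {x xi : V}

namespace IsTypeA

lemma notMem_neighborFinset (hA : IsTypeA G b x) (hxi : xi ∈ dezaB G b x) :
    xi ∉ G.neighborFinset x := fun h =>
  notMem_empty xi (hA ▸ mem_inter.2 ⟨hxi, h⟩)

lemma commonNbrs_eq (hG : IsDezaGraph G n k b a) (hA : IsTypeA G b x) {c : V}
    (hc : c ∈ G.neighborFinset x) : commonNbrs G c x = a := by
  have hcx : c ≠ x := ((mem_neighborFinset _ _ _).1 hc).ne'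
  refine (hG.commonNbrs_eq_or_eq hcx).resolve_left fun h => ?_
  exact hA.notMem_neighborFinset (mem_dezaB.2 ⟨hcx, h⟩) hc

lemma add_three_le (hG : IsDezaGraph G n k b a) (hA : IsTypeA G b x) {c u w : V}
    (hc : c ∈ G.neighborFinset x) (hu : u ∈ G.neighborFinset c) (hw : w ∈ G.neighborFinset c)
    (hux : u ∉ insert x (G.neighborFinset x)) (hwx : w ∉ insert x (G.neighborFinset x))
    (huw : u ≠ w) : a + 3 ≤ k := by
  have hsub : insert x (insert u (insert w (G.neighborFinset c ∩ G.neighborFinset x))) ⊆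
      G.neighborFinset c := by
    refine insert_subset (by simpa [adj_comm] using hc) (insert_subset hu (insert_subset hw
      inter_subset_left))
  have hcard := card_le_card hsub
  rw [mem_insert, not_or] at hux hwx
  rw [card_insert_of_notMem (by simp [Ne.symm hux.1, Ne.symm hwx.1]),
    card_insert_of_notMem (by simp [huw, hux.2]), card_insert_of_notMem (by simp [hwx.2]),
    ← commonNbrs, hA.commonNbrs_eq hG hc, card_neighborFinset_eq_degree,
    hG.isRegularOfDegree.degree_eq] at hcard
  omega

lemma exists_mem_neighborFinset_notMem (hG : IsDezaGraph G n (b + 1) b a) (hab : a < b)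
    (hA : IsTypeA G b x) {y : V} (hy : y ∈ G.neighborFinset x) :
    ∃ c ∈ G.neighborFinset x, c ≠ y ∧ c ∉ G.neighborFinset y := by
  by_contra! h
  have hsub : (G.neighborFinset x).erase y ⊆ G.neighborFinset y ∩ G.neighborFinset x :=
    fun c hc => mem_inter.2 ⟨h c (mem_of_mem_erase hc) (ne_of_mem_erase hc),
      mem_of_mem_erase hc⟩
  have hcard := card_le_card hsub
  rw [card_erase_of_mem hy, card_neighborFinset_eq_degree, hG.isRegularOfDegree.degree_eq,
    ← commonNbrs, hA.commonNbrs_eq hG hy] at hcard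
  omega

/-- Otherwise a neighbour `c` of `x` missing the vertex of `N(x) \ N(xᵢ)` would have exactly
`a + 1` common neighbours with `xᵢ`. -/
lemma notMem_dezaB_of_mem_sdiff (hG : IsDezaGraph G n (b + 1) b a) (hab : a < b)
    (hA : IsTypeA G b x) (hxi : xi ∈ dezaB G b x) {u : V} (hu : u ∈ G.neighborFinset xi)
    (hux : u ∉ G.neighborFinset x) : u ∉ dezaB G b xi := by
  intro huB
  have hreg := hG.isRegularOfDegree
  have hxix : xi ∉ G.neighborFinset x := hA.notMem_neighborFinset hxi
  have hxi_x : commonNbrs G xi x = b := (mem_dezaB.1 hxi).2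
  have hx_xi : commonNbrs G x xi = b := by rw [commonNbrs_comm, hxi_x]
  have hxi_u : commonNbrs G xi u = b := by rw [commonNbrs_comm, (mem_dezaB.1 huB).2]
  have hxxi : x ∉ G.neighborFinset xi := by simpa [adj_comm] using hxix
  obtain ⟨y, hy, hyxi⟩ := hreg.exists_mem_sdiff hx_xi
  obtain ⟨c, hc, hcy, hyc⟩ := hA.exists_mem_neighborFinset_notMem hG hab hy
  have hcxi : c ∈ G.neighborFinset xi := hreg.mem_neighborFinset_of_ne hx_xi hy hyxi hc hcy
  have hcu : c ∈ G.neighborFinset u := hreg.mem_neighborFinset_of_ne hxi_u hu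
    (G.notMem_neighborFinset_self u) hcxi (by rintro rfl; exact hux hc)
  have hbound : a + 3 ≤ b + 1 := hA.add_three_le hG hc (by simpa [adj_comm] using hcxi)
    (by simpa [adj_comm] using hcu) (by simp [(mem_dezaB.1 hxi).1, hxix])
    (by simp [hux]; rintro rfl; exact hxxi hu) (G.ne_of_adj ((mem_neighborFinset _ _ _).1 hu))
  have hinter : G.neighborFinset c ∩ G.neighborFinset xi =
      insert u (G.neighborFinset c ∩ G.neighborFinset x) := by
    ext w
    simp only [mem_inter, mem_insert]
    constructor
    · rintro ⟨hwc, hwxi⟩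
      by_cases hwx : w ∈ G.neighborFinset x
      · exact Or.inr ⟨hwc, hwx⟩
      · exact Or.inl (by_contra fun hwu =>
          hwx (hreg.mem_neighborFinset_of_ne hxi_x hu hux hwxi hwu))
    · rintro (rfl | ⟨hwc, hwx⟩)
      · exact ⟨by simpa [adj_comm] using hcu, hu⟩
      · refine ⟨hwc, hreg.mem_neighborFinset_of_ne hx_xi hy hyxi hwx ?_⟩
        rintro rfl
        exact hyc (by simpa [adj_comm] using hwc)
  have hcxi_card : commonNbrs G c xi = a + 1 := by
    rw [commonNbrs, hinter, card_insert_of_notMem (fun h => hux (mem_inter.1 h).2),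
      ← commonNbrs, hA.commonNbrs_eq hG hc]
  rcases hG.commonNbrs_eq_or_eq (show c ≠ xi by rintro rfl; exact hxix hc) with h | h <;> omega

lemma of_mem_dezaB (hG : IsDezaGraph G n (b + 1) b a) (hab : a < b) (hA : IsTypeA G b x)
    (hxi : xi ∈ dezaB G b x) : IsTypeA G b xi := by
  refine eq_empty_of_forall_notMem fun u hu => ?_
  obtain ⟨huB, hu⟩ := mem_inter.1 hu
  by_cases hux : u ∈ G.neighborFinset x
  · have hxu : x ∈ G.neighborFinset u := by simpa [adj_comm] using hux
    have hxiu : xi ∈ G.neighborFinset u := by simpa [adj_comm] using hu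
    have hxxi : x ∉ G.neighborFinset xi := by
      simpa [adj_comm] using hA.notMem_neighborFinset hxi
    exact hxxi (hG.isRegularOfDegree.mem_neighborFinset_of_ne (mem_dezaB.1 huB).2 hxiu
      (G.notMem_neighborFinset_self xi) hxu (mem_dezaB.1 hxi).1.symm)
  · exact hA.notMem_dezaB_of_mem_sdiff hG hab hxi hu hux huB

/-- `xᵢ` and `xⱼ` share all of `N(x)` but at most two vertices, so having only `a` common
neighbours forces `a = k - 2`; a neighbour of `x` adjacent to `x`, `xᵢ` and `xⱼ` then has
too many neighbours. -/
lemma mem_dezaB_of_mem_dezaB (hG : IsStrictlyDezaGraph G n (b + 1) b a) (hA : IsTypeA G b x)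
    (hxi : xi ∈ dezaB G b x) {xj : V} (hxj : xj ∈ dezaB G b x) (hne : xi ≠ xj) :
    xj ∈ dezaB G b xi := by
  refine mem_dezaB.2 ⟨hne.symm, (hG.1.commonNbrs_eq_or_eq hne.symm).resolve_right fun ha => ?_⟩
  have hreg := hG.1.isRegularOfDegree
  have hx_xi : commonNbrs G x xi = b := by rw [commonNbrs_comm, (mem_dezaB.1 hxi).2]
  have hx_xj : commonNbrs G x xj = b := by rw [commonNbrs_comm, (mem_dezaB.1 hxj).2]
  obtain ⟨yi, hyi, hyixi⟩ := hreg.exists_mem_sdiff hx_xi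
  obtain ⟨yj, hyj, hyjxj⟩ := hreg.exists_mem_sdiff hx_xj
  have hsub : ((G.neighborFinset x).erase yi).erase yj ⊆
      G.neighborFinset xj ∩ G.neighborFinset xi := fun c hc =>
    have hcx := mem_of_mem_erase (mem_of_mem_erase hc)
    mem_inter.2 ⟨hreg.mem_neighborFinset_of_ne hx_xj hyj hyjxj hcx (ne_of_mem_erase hc),
      hreg.mem_neighborFinset_of_ne hx_xi hyi hyixi hcx (ne_of_mem_erase (mem_of_mem_erase hc))⟩
  have hcard : b - 1 ≤ #(((G.neighborFinset x).erase yi).erase yj) := by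
    have h1 := pred_card_le_card_erase (s := (G.neighborFinset x).erase yi) (a := yj)
    have h2 := pred_card_le_card_erase (s := G.neighborFinset x) (a := yi)
    rw [card_neighborFinset_eq_degree, hreg.degree_eq] at h2
    omega
  have hab := hG.a_lt_b
  have hb := hG.two_le_b
  have ha' : b - 1 ≤ a := ha ▸ hcard.trans (card_le_card hsub)
  obtain ⟨c, hc⟩ : (((G.neighborFinset x).erase yi).erase yj).Nonempty := by
    rw [← card_pos]; omega
  have hxix := hA.notMem_neighborFinset hxi
  have hxjx := hA.notMem_neighborFinset hxj
  have hbound : a + 3 ≤ b + 1 := hA.add_three_le hG.1 (mem_of_mem_erase (mem_of_mem_erase hc))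
    (by simpa [adj_comm] using (mem_inter.1 (hsub hc)).2)
    (by simpa [adj_comm] using (mem_inter.1 (hsub hc)).1)
    (by simp [(mem_dezaB.1 hxi).1, hxix]) (by simp [(mem_dezaB.1 hxj).1, hxjx]) hne
  omega

lemma dezaBc_subset (hG : IsStrictlyDezaGraph G n (b + 1) b a) (hA : IsTypeA G b x)
    (hxi : xi ∈ dezaB G b x) : dezaBc G b x ⊆ dezaBc G b xi := by
  intro u hu
  rw [dezaBc, mem_insert] at hu ⊢
  rcases hu with rfl | hu
  · exact Or.inr (mem_dezaB_comm.1 hxi)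
  · by_cases huxi : u = xi
    · exact Or.inl huxi
    · exact Or.inr (hA.mem_dezaB_of_mem_dezaB hG hxi hu (Ne.symm huxi))

end IsTypeA

end

theorem stmt8_general {V : Type u} [Fintype V] [DecidableEq V] (G : SimpleGraph V)
    [DecidableRel G.Adj] (n k b a : ℕ)
    (hG : IsStrictlyDezaGraph G n k b a) (hk : k = b + 1) :
    ∀ x xi : V, IsTypeA G b x → xi ∈ dezaB G b x →
      dezaBc G b x = dezaBc G b xi ∧
      dezaB G b xi ∩ G.neighborFinset xi = ∅ ∧
      IsTypeA G b xi := by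
  subst hk
  intro x xi hA hxi
  have hAxi : IsTypeA G b xi := hA.of_mem_dezaB hG.1 hG.a_lt_b hxi
  exact ⟨(hA.dezaBc_subset hG hxi).antisymm (hAxi.dezaBc_subset hG (mem_dezaB_comm.1 hxi)),
    hAxi, hAxi⟩

theorem stmt8 {V : Type u} [Fintype V] [DecidableEq V] (G : SimpleGraph V)
    [DecidableRel G.Adj] (n k b a : ℕ)
    (hG : IsStrictlyDezaGraph G n k b a) (hk : k = b + 1)
    (hβ : ∀ v : V, 1 < (dezaB G b v).card) :
    ∀ x xi : V, IsTypeA G b x → xi ∈ dezaB G b x →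
      dezaBc G b x = dezaBc G b xi ∧
      dezaB G b xi ∩ G.neighborFinset xi = ∅ ∧
      IsTypeA G b xi :=
  stmt8_general G n k b a hG hk
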